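/- Let c = c^cr = 1/(4 log 2). For all constants T > 0, K > 0 and every ε > 0 there exists N₀ such that for every integer N ≥ N₀, every integer j with 1 ≤ j ≤ T·N^{4/3}, every nondecreasing sequence 𝐀 = (A₁ ⊆ A₂ ⊆ … ⊆ A_j) of subsets of V_N with |A_j| ≤ K·N^{4/3}, every a ∈ V_N and every b ∈ V_N ∖ (A_j ∪ {a}): Q(𝐀,j; a,b) ≤ (1 + ε)·max(4c²·(log N)/N², p(a,b)). -/

import Mathlib

/-!
At `c = c^cr` the row sums of `p` are asymptotically one: `∑ᵥ p(x,v) = (c/N) ∑_{w ≠ 0} 1/|w|`,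
and restricting `w` to the quadrants reduces this to the double harmonic sum
`∑_{s,t ≤ M} 1/(s+t)`, which telescopes to the logarithm of the central binomial coefficient
`C(2M+2, M+1) ≥ 4^(M+1)/(2M+2)`; this gives `∑ᵥ p(x,v) ≥ 1 - O(log N / N)`. A set of
`O(N^(4/3))` vertices carries only `o(1)` of this mass, so every normalisation `Z_{N,A}` of the
walk is at least `1 - δ`, and every transition probability is at most `p/(1 - δ)`.

One step is then bounded by `p(a,b)/(1 - δ)`. A walk of two or more steps is an average of
two-step walks, and `∑_y p(x,y) p(y,b) ≤ (c/N)² ∑_{w ≠ 0} |w|⁻² ≤ (c/N)² (4 log N + 12)` by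
AM-GM and the fact that at most `4(r+1)` points lie at distance `r`.
-/


open scoped BigOperators

/-- Vertices of the discrete 2-dimensional torus. -/
abbrev Vtx (N : ℕ) : Type := ZMod N × ZMod N

/-- `ρ_N(i)`: for a residue represented in `{0,…,N−1}`, `ρ_N(i) = i` if `i ≤ N/2`
and `ρ_N(i) = N − i` otherwise. -/
def rhoN (N : ℕ) (i : ZMod N) : ℕ :=
  if 2 * i.val ≤ N then i.val else N - i.val

/-- Torus distance `ρ(u,v) = ρ_N(u₁ − v₁) + ρ_N(u₂ − v₂)`. -/
def torusDist (N : ℕ) (u v : Vtx N) : ℕ :=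
  rhoN N (u.1 - v.1) + rhoN N (u.2 - v.2)

/-- Connection probability `p(u,v) = min(c/(N·ρ(u,v)), 1)` for `u ≠ v`, `p(u,u) = 0`. -/
noncomputable def edgeProb (N : ℕ) (c : ℝ) (u v : Vtx N) : ℝ :=
  if u = v then 0 else min (c / ((N : ℝ) * (torusDist N u v : ℝ))) 1

/-- The critical value `c^cr = 1/(4 log 2)`. -/
noncomputable def ccr : ℝ := 1 / (4 * Real.log 2)

/-- `Z_{N,A}(u) = Σ_{v ∈ V_N∖A, v ≠ u} p(u,v)`. -/
noncomputable def ZNA (N : ℕ) [NeZero N] (c : ℝ) (A : Finset (Vtx N)) (u : Vtx N) : ℝ :=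
  ∑ v ∈ (Finset.univ \ A).erase u, edgeProb N c u v

/-- Transition kernel of the chain avoiding `A`:
`P_A(u,v) = p(u,v)/Z_{N,A}(u)` for `v ∉ A`, and `0` for `v ∈ A`. -/
noncomputable def transPA (N : ℕ) [NeZero N] (c : ℝ) (A : Finset (Vtx N))
    (u v : Vtx N) : ℝ :=
  if v ∈ A then 0 else edgeProb N c u v / ZNA N c A u

/-- Auxiliary recursion for the memory-walk kernel: `memQ i m H x b` is the sum over
paths of `m` further steps, starting from `x` at time `i` with history `H`, where the
`i`-th step uses the kernel `P_{A_i ∪ H}` (which vanishes on targets in `A_i ∪ H`). -/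
noncomputable def memQ (N : ℕ) [NeZero N] (c : ℝ) (A : ℕ → Finset (Vtx N)) :
    ℕ → ℕ → Finset (Vtx N) → Vtx N → Vtx N → ℝ
  | _, 0, _, x, b => if x = b then 1 else 0
  | i, m + 1, H, x, b =>
      ∑ y : Vtx N, transPA N c (A i ∪ H) x y * memQ N c A (i + 1) m (insert y H) y b

/-- The `k`-step memory-walk kernel `Q(𝐀,k;a,b)`: the sum over all tuples
`(u₂,…,u_k)` with `u_i ∉ A_{i−1} ∪ {a,u₂,…,u_{i−1}}` of
`P_{A₁∪{a}}(a,u₂)·P_{A₂∪{a,u₂}}(u₂,u₃)·…·P_{A_k∪{a,u₂,…,u_k}}(u_k,b)`. -/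
noncomputable def kernelQ (N : ℕ) [NeZero N] (c : ℝ) (A : ℕ → Finset (Vtx N))
    (k : ℕ) (a b : Vtx N) : ℝ :=
  memQ N c A 1 k {a} a b


open Finset

section TorusDistance

variable {N : ℕ}

lemma rhoN_zero : rhoN N 0 = 0 := by simp [rhoN]

@[simp] lemma torusDist_self (u : Vtx N) : torusDist N u u = 0 := by simp [torusDist, rhoN_zero]

lemma torusDist_zero_right (w : Vtx N) : torusDist N w 0 = rhoN N w.1 + rhoN N w.2 := by
  simp [torusDist]

lemma torusDist_sub_zero (u v : Vtx N) : torusDist N u v = torusDist N (u - v) 0 := by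
  simp [torusDist]

variable [NeZero N]

lemma two_mul_rhoN_le (i : ZMod N) : 2 * rhoN N i ≤ N := by
  unfold rhoN
  split_ifs with h
  · exact h
  · have := ZMod.val_lt i; omega

lemma rhoN_eq_zero_iff {i : ZMod N} : rhoN N i = 0 ↔ i = 0 := by
  have := ZMod.val_lt i
  rw [← ZMod.val_eq_zero]
  unfold rhoN
  split_ifs <;> omega

lemma rhoN_neg (i : ZMod N) : rhoN N (-i) = rhoN N i := by
  rcases eq_or_ne i 0 with rfl | h
  · simp
  · have := ZMod.val_lt i
    have := (ZMod.val_ne_zero i).2 h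
    unfold rhoN
    rw [ZMod.neg_val, if_neg h]
    split_ifs <;> omega

lemma rhoN_natCast {s : ℕ} (hs : 2 * s ≤ N) : rhoN N s = s := by
  have hsN : s < N := by
    have := NeZero.pos N
    omega
  rw [rhoN, ZMod.val_cast_of_lt hsN, if_pos hs]

lemma torusDist_comm (u v : Vtx N) : torusDist N u v = torusDist N v u := by
  rw [torusDist, torusDist, ← rhoN_neg, ← rhoN_neg (u.2 - v.2), neg_sub, neg_sub]

lemma one_le_torusDist {u v : Vtx N} (h : u ≠ v) : 1 ≤ torusDist N u v := by
  by_contra! h'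
  exact h (Prod.ext_iff.2 (by simpa [torusDist, rhoN_eq_zero_iff, sub_eq_zero] using h'))

lemma torusDist_le (u v : Vtx N) : torusDist N u v ≤ N := by
  have := two_mul_rhoN_le (u.1 - v.1)
  have := two_mul_rhoN_le (u.2 - v.2)
  unfold torusDist; omega

lemma sum_comp_torusDist (x : Vtx N) (f : ℕ → ℝ) :
    ∑ v, f (torusDist N x v) = ∑ w, f (torusDist N w 0) :=
  Fintype.sum_equiv (Equiv.subLeft x) _ _ fun v => by rw [torusDist_sub_zero]; rfl

end TorusDistance

section EdgeProb

variable {N : ℕ} {c : ℝ}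

lemma edgeProb_nonneg (hc : 0 ≤ c) (u v : Vtx N) : 0 ≤ edgeProb N c u v := by
  unfold edgeProb
  split_ifs
  · exact le_rfl
  · exact le_min (by positivity) zero_le_one

-- On the diagonal both sides vanish, since `torusDist N u u = 0` and `c / 0 = 0`.
lemma edgeProb_le_div (u v : Vtx N) : edgeProb N c u v ≤ c / (N * torusDist N u v) := by
  unfold edgeProb
  split_ifs with h
  · simp [h]
  · exact min_le_left _ _

variable [NeZero N]

lemma edgeProb_comm (u v : Vtx N) : edgeProb N c u v = edgeProb N c v u := by
  simp only [edgeProb, eq_comm (a := u), torusDist_comm u v]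

lemma edgeProb_eq_div (hc : c ≤ 1) (u v : Vtx N) :
    edgeProb N c u v = c / (N * torusDist N u v) := by
  refine (edgeProb_le_div u v).antisymm ?_
  unfold edgeProb
  split_ifs with h
  · simp [h]
  · have hd : (1 : ℝ) ≤ torusDist N u v := by exact_mod_cast one_le_torusDist h
    have hN : (1 : ℝ) ≤ N := by exact_mod_cast NeZero.one_le
    refine le_min le_rfl ((div_le_one (by positivity)).2 ?_)
    nlinarith

lemma edgeProb_le_div_self (hc : 0 ≤ c) (u v : Vtx N) : edgeProb N c u v ≤ c / N := by
  refine (edgeProb_le_div u v).trans ?_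
  rcases eq_or_ne u v with rfl | h
  · simp only [torusDist_self, Nat.cast_zero, mul_zero, div_zero]
    positivity
  · have hd : (1 : ℝ) ≤ torusDist N u v := by exact_mod_cast one_le_torusDist h
    exact div_le_div_of_nonneg_left hc (by exact_mod_cast NeZero.pos N)
      (le_mul_of_one_le_right (Nat.cast_nonneg N) hd)

end EdgeProb

section Counting

lemma sum_comp_eq_sum_card_mul {α : Type*} [Fintype α] (g : α → ℕ) {n : ℕ} (hg : ∀ a, g a ≤ n)
    (f : ℕ → ℝ) : ∑ a, f (g a) = ∑ r ∈ range (n + 1), (#{a | g a = r} : ℝ) * f r := by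
  rw [← sum_fiberwise_of_maps_to' (t := range (n + 1))
    fun a _ => mem_range.2 (Nat.lt_succ_of_le (hg a))]
  simp only [sum_const, nsmul_eq_mul]

variable {N : ℕ} [NeZero N]

lemma rhoN_fiber_subset (s : ℕ) :
    ({i | rhoN N i = s} : Finset (ZMod N)) ⊆ {(s : ZMod N), -(s : ZMod N)} := by
  intro i hi
  have hi := (mem_filter.1 hi).2
  have := ZMod.val_lt i
  rw [mem_insert, mem_singleton]
  unfold rhoN at hi
  split_ifs at hi
  · exact .inl (by rw [← hi, ZMod.natCast_zmod_val])
  · refine .inr (eq_neg_of_add_eq_zero_right ?_)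
    rw [← ZMod.natCast_zmod_val i, ← Nat.cast_add, show s + i.val = N by omega,
      ZMod.natCast_self]

lemma card_rhoN_fiber_le (s : ℕ) : #{i : ZMod N | rhoN N i = s} ≤ 2 :=
  (card_le_card (rhoN_fiber_subset s)).trans card_le_two

lemma two_le_card_rhoN_fiber {s : ℕ} (hs : 1 ≤ s) (hsN : 2 * s < N) :
    2 ≤ #{i : ZMod N | rhoN N i = s} := by
  have hne : (s : ZMod N) ≠ -(s : ZMod N) := by
    rw [Ne, eq_neg_iff_add_eq_zero, ← Nat.cast_add, ZMod.natCast_eq_zero_iff]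
    exact fun h => absurd (Nat.le_of_dvd (by omega) h) (by omega)
  rw [← card_pair hne]
  refine card_le_card fun i hi => ?_
  rw [mem_filter]
  rcases mem_insert.1 hi with rfl | hi
  · exact ⟨mem_univ _, rhoN_natCast hsN.le⟩
  · rw [mem_singleton.1 hi, rhoN_neg]
    exact ⟨mem_univ _, rhoN_natCast hsN.le⟩

lemma card_rhoN_le_le (R : ℕ) : #{i : ZMod N | rhoN N i ≤ R} ≤ 2 * (R + 1) := by
  rw [card_eq_sum_card_fiberwise (f := rhoN N) (t := range (R + 1))
    fun i hi => mem_range.2 (Nat.lt_succ_of_le (mem_filter.1 hi).2)]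
  calc ∑ r ∈ range (R + 1), #{i ∈ ({i | rhoN N i ≤ R} : Finset (ZMod N)) | rhoN N i = r}
      ≤ ∑ _r ∈ range (R + 1), 2 := sum_le_sum fun r _ =>
        (card_le_card (filter_subset_filter _ (filter_subset _ _))).trans (card_rhoN_fiber_le r)
    _ = 2 * (R + 1) := by simp [mul_comm]

lemma card_torusDist_fiber_le (r : ℕ) : #{w : Vtx N | torusDist N w 0 = r} ≤ 4 * (r + 1) := by
  simp only [torusDist_zero_right]
  rw [card_eq_sum_card_fiberwise (f := fun w : Vtx N => rhoN N w.1) (t := range (r + 1))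
    fun w hw => mem_range.2 (by simp at hw; show rhoN N w.1 < r + 1; omega)]
  calc ∑ s ∈ range (r + 1), #{w ∈ {w : Vtx N | rhoN N w.1 + rhoN N w.2 = r} | rhoN N w.1 = s}
      ≤ ∑ s ∈ range (r + 1),
          #(univ.filter (rhoN N · = s) ×ˢ univ.filter (rhoN N · = r - s)) :=
        sum_le_sum fun s _ => card_le_card fun w hw => by
          simp only [mem_filter] at hw
          simp only [mem_product, mem_filter_univ]
          omega
    _ ≤ ∑ _s ∈ range (r + 1), 4 := sum_le_sum fun s _ => by
        rw [card_product]
        exact Nat.mul_le_mul (card_rhoN_fiber_le s) (card_rhoN_fiber_le (r - s))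
    _ = 4 * (r + 1) := by simp [mul_comm]

lemma card_ball_le (x : Vtx N) (R : ℕ) : #{v : Vtx N | torusDist N x v ≤ R} ≤ 4 * (R + 1) ^ 2 := by
  calc #{v : Vtx N | torusDist N x v ≤ R}
      ≤ #(univ.filter (rhoN N · ≤ R) ×ˢ univ.filter (rhoN N · ≤ R)) := by
        refine card_le_card_of_injOn (fun v => x - v) (fun v hv => ?_) sub_right_injective.injOn
        replace hv : torusDist N x v ≤ R := by simpa using hv
        simp only [torusDist] at hv
        simp only [coe_product, coe_filter, mem_univ, true_and, Set.mem_prod, Set.mem_ofPred_eq,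
          Prod.fst_sub, Prod.snd_sub]
        omega
    _ ≤ 4 * (R + 1) ^ 2 := by
        rw [card_product]
        nlinarith [card_rhoN_le_le (N := N) R]

end Counting

section UpperSums

lemma sum_range_succ_eq_sum_Icc {f : ℕ → ℝ} (h0 : f 0 = 0) (n : ℕ) :
    ∑ r ∈ range (n + 1), f r = ∑ r ∈ Icc 1 n, f r := by
  rw [range_eq_Ico, sum_eq_sum_Ico_succ_bot (Nat.succ_pos n), h0, zero_add]
  rfl

variable {N : ℕ} [NeZero N]

lemma sum_comp_torusDist_le {f : ℕ → ℝ} (hf : ∀ r, 0 ≤ f r) :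
    ∑ w : Vtx N, f (torusDist N w 0) ≤ ∑ r ∈ range (N + 1), 4 * ((r : ℝ) + 1) * f r := by
  rw [sum_comp_eq_sum_card_mul _ (torusDist_le · 0)]
  refine sum_le_sum fun r _ => mul_le_mul_of_nonneg_right ?_ (hf r)
  exact_mod_cast card_torusDist_fiber_le r

lemma sum_inv_sq_torusDist_le :
    ∑ w : Vtx N, ((torusDist N w 0 : ℝ)⁻¹) ^ 2 ≤ 4 * Real.log N + 12 := by
  have hharmonic : ∑ r ∈ range (N + 1), (r : ℝ)⁻¹ ≤ 1 + Real.log N := by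
    rw [sum_range_succ_eq_sum_Icc (by simp)]
    exact le_of_eq_of_le (by simp [harmonic_eq_sum_Icc]) (harmonic_le_one_add_log N)
  have hsquares : ∑ r ∈ range (N + 1), ((r : ℝ)⁻¹) ^ 2 ≤ 2 := by
    rw [sum_range_succ_eq_sum_Icc (by simp), show Icc 1 N = Ioo 0 (N + 1) by ext; simp; omega]
    simpa [inv_pow] using sum_Ioo_inv_sq_le (α := ℝ) 0 (N + 1)
  -- `(r + 1) r⁻² = r⁻¹ + r⁻²` also at `r = 0`, where every term is `0`.
  have hsplit (r : ℕ) :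
      4 * ((r : ℝ) + 1) * ((r : ℝ)⁻¹) ^ 2 = 4 * (r : ℝ)⁻¹ + 4 * ((r : ℝ)⁻¹) ^ 2 := by
    rcases eq_or_ne r 0 with rfl | hr
    · simp
    · field_simp
  calc ∑ w : Vtx N, ((torusDist N w 0 : ℝ)⁻¹) ^ 2
      ≤ ∑ r ∈ range (N + 1), 4 * ((r : ℝ) + 1) * ((r : ℝ)⁻¹) ^ 2 :=
        sum_comp_torusDist_le (f := fun r => ((r : ℝ)⁻¹) ^ 2) fun r => by positivity
    _ = 4 * ∑ r ∈ range (N + 1), (r : ℝ)⁻¹ + 4 * ∑ r ∈ range (N + 1), ((r : ℝ)⁻¹) ^ 2 := by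
        simp only [hsplit, sum_add_distrib, mul_sum]
    _ ≤ 4 * Real.log N + 12 := by linarith

lemma sum_sq_edgeProb_le {c : ℝ} (hc : 0 ≤ c) (x : Vtx N) :
    ∑ y, edgeProb N c x y ^ 2 ≤ (c / N) ^ 2 * (4 * Real.log N + 12) := by
  calc ∑ y, edgeProb N c x y ^ 2 ≤ ∑ y, (c / N) ^ 2 * ((torusDist N x y : ℝ)⁻¹) ^ 2 :=
        sum_le_sum fun y _ => by
          rw [← mul_pow, ← div_eq_mul_inv, div_div]
          exact pow_le_pow_left₀ (edgeProb_nonneg hc x y) (edgeProb_le_div x y) 2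
    _ = (c / N) ^ 2 * ∑ w : Vtx N, ((torusDist N w 0 : ℝ)⁻¹) ^ 2 := by
        rw [← mul_sum, sum_comp_torusDist x fun r => ((r : ℝ)⁻¹) ^ 2]
    _ ≤ (c / N) ^ 2 * (4 * Real.log N + 12) :=
        mul_le_mul_of_nonneg_left sum_inv_sq_torusDist_le (by positivity)

lemma sum_edgeProb_mul_edgeProb_le {c : ℝ} (hc : 0 ≤ c) (x b : Vtx N) :
    ∑ y, edgeProb N c x y * edgeProb N c y b ≤ (c / N) ^ 2 * (4 * Real.log N + 12) := by
  have hb := sum_sq_edgeProb_le hc b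
  simp only [edgeProb_comm b] at hb
  calc ∑ y, edgeProb N c x y * edgeProb N c y b
      ≤ ∑ y, (edgeProb N c x y ^ 2 + edgeProb N c y b ^ 2) / 2 :=
        sum_le_sum fun y _ => by nlinarith [sq_nonneg (edgeProb N c x y - edgeProb N c y b)]
    _ = ((∑ y, edgeProb N c x y ^ 2) + ∑ y, edgeProb N c y b ^ 2) / 2 := by
        rw [← sum_add_distrib, sum_div]
    _ ≤ (c / N) ^ 2 * (4 * Real.log N + 12) := by linarith [sum_sq_edgeProb_le hc x]

end UpperSums

section LowerSums

open Real

lemma log_add_sub_log_le_sum_inv {a : ℝ} (ha : 0 < a) (M : ℕ) :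
    log (a + M) - log a ≤ ∑ t ∈ range M, (a + t)⁻¹ := by
  induction M with
  | zero => simp
  | succ M ih =>
    have hy : 0 < a + M := by positivity
    have step : log (a + M + 1) - log (a + M) ≤ (a + M)⁻¹ := by
      rw [← log_div (by positivity) hy.ne']
      refine (log_le_sub_one_of_pos (by positivity)).trans_eq ?_
      field_simp
      ring
    rw [sum_range_succ, Nat.cast_succ, ← add_assoc]
    linarith

lemma log_ascFactorial {n : ℕ} (hn : 0 < n) (k : ℕ) :
    log (n.ascFactorial k) = ∑ i ∈ range k, log ((n : ℝ) + i) := by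
  rw [Nat.ascFactorial_eq_prod_range, Nat.cast_prod, log_prod fun i _ => by positivity]
  push_cast
  rfl

lemma two_mul_add_two_mul_ascFactorial (M : ℕ) :
    (2 * M + 2) * (M + 2).ascFactorial M = (M + 1).centralBinom * (2 : ℕ).ascFactorial M := by
  have h1 := Nat.factorial_mul_ascFactorial (M + 1) M
  have h2 : (2 : ℕ).ascFactorial M = (M + 1).factorial := by
    simpa [add_comm] using Nat.factorial_mul_ascFactorial 1 M
  have h3 := Nat.choose_mul_factorial_mul_factorial (show M + 1 ≤ 2 * (M + 1) by omega)
  rw [show 2 * (M + 1) - (M + 1) = M + 1 by omega] at h3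
  refine Nat.eq_of_mul_eq_mul_left (Nat.factorial_pos (M + 1)) ?_
  rw [h2, Nat.centralBinom_eq_two_mul_choose]
  calc (M + 1).factorial * ((2 * M + 2) * (M + 2).ascFactorial M)
      = (2 * M + 2) * ((M + 1).factorial * (M + 2).ascFactorial M) := by ring
    _ = (2 * (M + 1)).factorial := by
        rw [h1, show 2 * M + 2 = M + 1 + M + 1 by omega, ← Nat.factorial_succ]
        ring_nf
    _ = (M + 1).factorial * ((2 * (M + 1)).choose (M + 1) * (M + 1).factorial) := by
        rw [← h3]; ring

/-- The double harmonic sum telescopes to `log (centralBinom (M + 1) / (2M + 2))`. -/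
lemma sum_inv_add_ge (M : ℕ) :
    2 * (M + 1) * log 2 - 2 * log (2 * M + 2) ≤
      ∑ s ∈ range M, ∑ t ∈ range M, ((s + 1 + (t + 1) : ℕ) : ℝ)⁻¹ := by
  have inner (s : ℕ) : log ((M : ℝ) + 2 + s) - log (2 + s) ≤
      ∑ t ∈ range M, ((s + 1 + (t + 1) : ℕ) : ℝ)⁻¹ := by
    convert log_add_sub_log_le_sum_inv (a := 2 + s) (by positivity) M using 2
    · ring_nf
    · push_cast; ring_nf
  have binom_ne_zero : ((M + 1).centralBinom : ℝ) ≠ 0 :=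
    Nat.cast_ne_zero.2 (Nat.centralBinom_ne_zero _)
  have telescoped : log (M + 1).centralBinom - log (2 * M + 2) =
      ∑ s ∈ range M, (log ((M : ℝ) + 2 + s) - log (2 + s)) := by
    have h := congrArg (fun n : ℕ => log n) (two_mul_add_two_mul_ascFactorial M)
    simp only [Nat.cast_mul] at h
    have pos (n k : ℕ) : ((n + 1).ascFactorial k : ℝ) ≠ 0 :=
      Nat.cast_ne_zero.2 (Nat.ascFactorial_pos n k).ne'
    rw [log_mul (by positivity) (pos _ _), log_mul binom_ne_zero (pos 1 M),
      log_ascFactorial (by omega), log_ascFactorial (by omega)] at h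
    rw [sum_sub_distrib]
    push_cast at h ⊢
    simp only [show (M : ℝ) + 1 + 1 = M + 2 by ring] at h
    linarith
  have binom : (M + 1) * log 4 ≤ log (2 * M + 2) + log (M + 1).centralBinom := by
    have h := Nat.four_pow_le_two_mul_self_mul_centralBinom (M + 1) (by omega)
    calc (M + 1) * log 4 = log (4 ^ (M + 1)) := by rw [log_pow]; push_cast; ring
      _ ≤ log ((2 * M + 2) * (M + 1).centralBinom) :=
        log_le_log (by positivity) (by exact_mod_cast h.trans_eq (by ring))
      _ = _ := log_mul (by positivity) binom_ne_zero
  have log_four : log 4 = 2 * log 2 := by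
    rw [show (4 : ℝ) = 2 ^ 2 by norm_num, log_pow]; push_cast; ring
  calc 2 * (M + 1) * log 2 - 2 * log (2 * M + 2)
      ≤ log (M + 1).centralBinom - log (2 * M + 2) := by rw [log_four] at binom; linarith
    _ ≤ _ := telescoped.trans_le (sum_le_sum fun s _ => inner s)

variable {N : ℕ} [NeZero N]

lemma two_mul_sum_le_sum_rhoN {f : ℕ → ℝ} (hf : ∀ r, 0 ≤ f r) {M : ℕ} (hM : 2 * M < N) :
    2 * ∑ s ∈ range M, f (s + 1) ≤ ∑ i : ZMod N, f (rhoN N i) := by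
  rw [sum_comp_eq_sum_card_mul _ fun i => (Nat.le_mul_of_pos_left _ two_pos).trans
    (two_mul_rhoN_le i)]
  calc 2 * ∑ s ∈ range M, f (s + 1)
      ≤ ∑ s ∈ range M, (#{i : ZMod N | rhoN N i = s + 1} : ℝ) * f (s + 1) := by
        rw [mul_sum]
        refine sum_le_sum fun s hs => mul_le_mul_of_nonneg_right ?_ (hf _)
        exact_mod_cast two_le_card_rhoN_fiber (by omega) (by simp at hs; omega)
    _ ≤ ∑ r ∈ range (M + 1), (#{i : ZMod N | rhoN N i = r} : ℝ) * f r := by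
        rw [sum_range_succ' _ M]
        exact le_add_of_nonneg_right (by positivity [hf 0])
    _ ≤ ∑ r ∈ range (N + 1), (#{i : ZMod N | rhoN N i = r} : ℝ) * f r :=
        sum_le_sum_of_subset_of_nonneg (range_subset_range.2 (by omega))
          fun r _ _ => mul_nonneg (Nat.cast_nonneg _) (hf r)

lemma four_mul_sum_inv_le_sum_inv_torusDist {M : ℕ} (hM : 2 * M < N) :
    4 * ∑ s ∈ range M, ∑ t ∈ range M, ((s + 1 + (t + 1) : ℕ) : ℝ)⁻¹ ≤
      ∑ w : Vtx N, (torusDist N w 0 : ℝ)⁻¹ := by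
  simp only [torusDist_zero_right, Fintype.sum_prod_type]
  calc 4 * ∑ s ∈ range M, ∑ t ∈ range M, ((s + 1 + (t + 1) : ℕ) : ℝ)⁻¹
      = 2 * ∑ t ∈ range M, 2 * ∑ s ∈ range M, ((s + 1 + (t + 1) : ℕ) : ℝ)⁻¹ := by
        rw [sum_comm, ← mul_sum, ← mul_assoc]; norm_num
    _ ≤ 2 * ∑ t ∈ range M, ∑ i : ZMod N, ((rhoN N i + (t + 1) : ℕ) : ℝ)⁻¹ := by
        gcongr with t
        exact two_mul_sum_le_sum_rhoN (f := fun r => ((r + (t + 1) : ℕ) : ℝ)⁻¹)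
          (fun _ => by positivity) hM
    _ = ∑ i : ZMod N, 2 * ∑ t ∈ range M, ((rhoN N i + (t + 1) : ℕ) : ℝ)⁻¹ := by
        rw [sum_comm, mul_sum]
    _ ≤ ∑ i : ZMod N, ∑ k : ZMod N, ((rhoN N i + rhoN N k : ℕ) : ℝ)⁻¹ := by
        gcongr with i
        exact two_mul_sum_le_sum_rhoN (f := fun r => ((rhoN N i + r : ℕ) : ℝ)⁻¹)
          (fun _ => by positivity) hM

end LowerSums

section Normalisation

open Real

lemma ccr_pos : 0 < ccr := by
  unfold ccr
  have := log_pos one_lt_two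
  positivity

lemma ccr_le_one : ccr ≤ 1 := by
  unfold ccr
  rw [div_le_one (by have := log_pos one_lt_two; positivity)]
  linarith [log_two_gt_d9]

lemma eight_mul_ccr_mul_log_two : 8 * ccr * log 2 = 2 := by
  unfold ccr
  field_simp [(log_pos one_lt_two).ne']
  norm_num

variable {N : ℕ} [NeZero N]

lemma one_sub_le_sum_edgeProb (x : Vtx N) :
    1 - 8 * ccr * log (N + 1) / N ≤ ∑ v, edgeProb N ccr x v := by
  set M := (N - 1) / 2
  have hN : (0 : ℝ) < N := by exact_mod_cast NeZero.pos N
  have hM₁ : (N : ℝ) ≤ 2 * M + 2 := by exact_mod_cast (show N ≤ 2 * M + 2 by omega)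
  have hM₂ : (2 * M + 2 : ℝ) ≤ N + 1 := by
    exact_mod_cast (show 2 * M + 2 ≤ N + 1 by have := NeZero.pos N; omega)
  have hlog : log (2 * M + 2) ≤ log (N + 1) := log_le_log (by positivity) hM₂
  have hsum : ∑ v, edgeProb N ccr x v = ccr / N * ∑ w : Vtx N, (torusDist N w 0 : ℝ)⁻¹ := by
    rw [mul_sum, ← sum_comp_torusDist x fun r => ccr / N * (r : ℝ)⁻¹]
    exact sum_congr rfl fun v _ => by rw [edgeProb_eq_div ccr_le_one]; ring
  have hc := ccr_pos
  calc 1 - 8 * ccr * log (N + 1) / N ≤ (2 * (M + 1) - 8 * ccr * log (2 * M + 2)) / N := by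
        rw [one_sub_div hN.ne']
        gcongr
        nlinarith
    _ = ccr / N * (4 * (2 * (M + 1) * log 2 - 2 * log (2 * M + 2))) := by
        linear_combination (-(M + 1 : ℝ) / N) * eight_mul_ccr_mul_log_two
    _ ≤ ccr / N * ∑ w : Vtx N, (torusDist N w 0 : ℝ)⁻¹ := by
        gcongr
        linarith [sum_inv_add_ge M, four_mul_sum_inv_le_sum_inv_torusDist (N := N)
          (show 2 * M < N by have := NeZero.pos N; omega)]
    _ = _ := hsum.symm

end Normalisation

section Deletion

open Real

variable {N : ℕ} [NeZero N] {c : ℝ}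

lemma sum_edgeProb_le_of_pos (hc : 0 ≤ c) (S : Finset (Vtx N)) (x : Vtx N) {r : ℝ}
    (hr : 0 < r) : ∑ v ∈ S, edgeProb N c x v ≤ c / N * (4 * (r + 1) ^ 2 + #S / r) := by
  set R := ⌊r⌋₊
  rw [← sum_filter_add_sum_filter_not S (fun v => torusDist N x v ≤ R), mul_add]
  refine add_le_add ?near ?far
  case near =>
    have hcard : (#{v ∈ S | torusDist N x v ≤ R} : ℝ) ≤ 4 * (r + 1) ^ 2 := by
      have h := (card_le_card (filter_subset_filter _ (subset_univ S))).trans (card_ball_le x R)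
      have hR : (R : ℝ) ≤ r := Nat.floor_le hr.le
      calc (#{v ∈ S | torusDist N x v ≤ R} : ℝ) ≤ 4 * (R + 1) ^ 2 := by exact_mod_cast h
        _ ≤ 4 * (r + 1) ^ 2 := by gcongr
    calc ∑ v ∈ S with torusDist N x v ≤ R, edgeProb N c x v
        ≤ ∑ v ∈ S with torusDist N x v ≤ R, c / N :=
          sum_le_sum fun v _ => edgeProb_le_div_self hc x v
      _ ≤ c / N * (4 * (r + 1) ^ 2) := by
        rw [sum_const, nsmul_eq_mul, mul_comm]
        gcongr
  case far =>
    calc ∑ v ∈ S with ¬torusDist N x v ≤ R, edgeProb N c x v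
        ≤ ∑ v ∈ S with ¬torusDist N x v ≤ R, c / N * r⁻¹ := sum_le_sum fun v hv => by
          have hd : r ≤ torusDist N x v := by
            have := (mem_filter.1 hv).2
            exact (Nat.lt_floor_add_one r).le.trans (by exact_mod_cast (show R + 1 ≤ _ by omega))
          refine (edgeProb_le_div x v).trans ?_
          rw [← div_div, div_eq_mul_inv (c / N)]
          gcongr
      _ = #{v ∈ S | ¬torusDist N x v ≤ R} * (c / N * r⁻¹) := by rw [sum_const, nsmul_eq_mul]
      _ ≤ #S * (c / N * r⁻¹) := by
        gcongr
        exact filter_subset _ _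
      _ = c / N * (#S / r) := by ring

lemma sum_edgeProb_le_of_card_le (hc : 0 ≤ c) {C : ℝ} (S : Finset (Vtx N)) (x : Vtx N)
    (hS : (#S : ℝ) ≤ C * N ^ ((4 : ℝ) / 3)) :
    ∑ v ∈ S, edgeProb N c x v ≤ c * (16 * N ^ (-(1 / 5 : ℝ)) + C * N ^ (-(1 / 15 : ℝ))) := by
  have hN : (0 : ℝ) < N := by exact_mod_cast NeZero.pos N
  -- The near part `r² / N` and the far part `|S| / (N r)` are both small for `r = N^(2/5)`.
  set r := (N : ℝ) ^ (2 / 5 : ℝ)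
  have hr : 1 ≤ r := one_le_rpow (by exact_mod_cast NeZero.one_le) (by norm_num)
  have e₁ : (N : ℝ) ^ (-(1 / 5 : ℝ)) = r ^ 2 / N := by
    rw [show -(1 / 5 : ℝ) = 2 / 5 * (2 : ℕ) - 1 by norm_num, rpow_sub_one hN.ne',
      rpow_mul_natCast hN.le]
  have e₂ : (N : ℝ) ^ (-(1 / 15 : ℝ)) = N ^ ((4 : ℝ) / 3) / r / N := by
    rw [show -(1 / 15 : ℝ) = 4 / 3 - 2 / 5 - 1 by norm_num, rpow_sub_one hN.ne', rpow_sub hN]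
  calc ∑ v ∈ S, edgeProb N c x v ≤ c / N * (4 * (r + 1) ^ 2 + #S / r) :=
        sum_edgeProb_le_of_pos hc S x (by positivity)
    _ ≤ c / N * (16 * r ^ 2 + C * N ^ ((4 : ℝ) / 3) / r) := by
        gcongr c / N * (?_ + ?_)
        · nlinarith
        · exact div_le_div_of_nonneg_right hS (by positivity)
    _ = c * (16 * N ^ (-(1 / 5 : ℝ)) + C * N ^ (-(1 / 15 : ℝ))) := by
        rw [e₁, e₂]
        ring

lemma ZNA_add_sum_edgeProb (c : ℝ) (S : Finset (Vtx N)) (x : Vtx N) :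
    ZNA N c S x + ∑ v ∈ S, edgeProb N c x v = ∑ v, edgeProb N c x v := by
  rw [ZNA, sum_erase _ (by simp [edgeProb]), sum_sdiff (subset_univ S)]

end Deletion

section Asymptotics

open Real Filter Topology

lemma tendsto_log_add_one_div_atTop :
    Tendsto (fun N : ℕ => log (N + 1) / N) atTop (𝓝 0) := by
  have h := (tendsto_pow_log_div_mul_add_atTop 1 (-1) 1 one_ne_zero).comp
    (tendsto_atTop_add_const_right _ 1 tendsto_natCast_atTop_atTop)
  refine h.congr fun N => ?_
  simp

lemma eventually_one_sub_le_ZNA (C : ℝ) {δ : ℝ} (hδ : 0 < δ) :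
    ∀ᶠ N : ℕ in atTop, ∀ [NeZero N] (S : Finset (Vtx N)) (x : Vtx N),
      (#S : ℝ) ≤ C * N ^ ((4 : ℝ) / 3) → 1 - δ ≤ ZNA N ccr S x := by
  have hlim : Tendsto (fun N : ℕ => 8 * ccr * (log (N + 1) / N) +
      ccr * (16 * (N : ℝ) ^ (-(1 / 5 : ℝ)) + C * (N : ℝ) ^ (-(1 / 15 : ℝ)))) atTop (𝓝 0) := by
    have h₁ := (tendsto_rpow_neg_atTop (by norm_num : (0 : ℝ) < 1 / 5)).comp
      tendsto_natCast_atTop_atTop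
    have h₂ := (tendsto_rpow_neg_atTop (by norm_num : (0 : ℝ) < 1 / 15)).comp
      tendsto_natCast_atTop_atTop
    simpa using (tendsto_log_add_one_div_atTop.const_mul (8 * ccr)).add
      (((h₁.const_mul 16).add (h₂.const_mul C)).const_mul ccr)
  filter_upwards [hlim.eventually (eventually_le_nhds hδ)] with N hN _ S x hS
  have := ZNA_add_sum_edgeProb ccr S x
  have := one_sub_le_sum_edgeProb (N := N) x
  rw [mul_div_assoc] at this
  have := sum_edgeProb_le_of_card_le ccr_pos.le S x hS
  linarith

end Asymptotics

section MemoryWalk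

variable {N : ℕ} [NeZero N] {c : ℝ}

lemma ZNA_nonneg (hc : 0 ≤ c) (S : Finset (Vtx N)) (u : Vtx N) : 0 ≤ ZNA N c S u :=
  sum_nonneg fun v _ => edgeProb_nonneg hc u v

lemma transPA_nonneg (hc : 0 ≤ c) (S : Finset (Vtx N)) (u v : Vtx N) :
    0 ≤ transPA N c S u v := by
  unfold transPA
  split_ifs
  · exact le_rfl
  · exact div_nonneg (edgeProb_nonneg hc u v) (ZNA_nonneg hc S u)

lemma sum_transPA_le_one (S : Finset (Vtx N)) (u : Vtx N) :
    ∑ v, transPA N c S u v ≤ 1 := by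
  have h : ∑ v, transPA N c S u v = (∑ v ∈ univ \ S, edgeProb N c u v) / ZNA N c S u := by
    rw [sum_div, sdiff_eq_filter, sum_filter]
    exact sum_congr rfl fun v _ => by simp only [transPA]; split_ifs <;> simp_all
  rw [h, ← sum_erase _ (show edgeProb N c u u = 0 by simp [edgeProb])]
  exact div_self_le_one _

lemma transPA_le_div (hc : 0 ≤ c) {S : Finset (Vtx N)} {u : Vtx N} {δ : ℝ} (hδ : δ < 1)
    (hZ : 1 - δ ≤ ZNA N c S u) (v : Vtx N) :
    transPA N c S u v ≤ edgeProb N c u v / (1 - δ) := by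
  unfold transPA
  split_ifs
  · exact div_nonneg (edgeProb_nonneg hc u v) (by linarith)
  · exact div_le_div_of_nonneg_left (edgeProb_nonneg hc u v) (by linarith) hZ

lemma sum_transPA_mul_le (hc : 0 ≤ c) (S : Finset (Vtx N)) (u : Vtx N) {f : Vtx N → ℝ}
    {B : ℝ} (hf : ∀ v, f v ≤ B) (hB : 0 ≤ B) : ∑ v, transPA N c S u v * f v ≤ B :=
  calc ∑ v, transPA N c S u v * f v ≤ ∑ v, transPA N c S u v * B :=
        sum_le_sum fun v _ => mul_le_mul_of_nonneg_left (hf v) (transPA_nonneg hc S u v)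
    _ ≤ B := by
        rw [← sum_mul]
        exact mul_le_of_le_one_left hB (sum_transPA_le_one S u)

variable (A : ℕ → Finset (Vtx N))

lemma memQ_one (i : ℕ) (H : Finset (Vtx N)) (x b : Vtx N) :
    memQ N c A i 1 H x b = transPA N c (A i ∪ H) x b := by
  simp [memQ]

lemma memQ_two_le (hc : 0 ≤ c) {δ : ℝ} (hδ : δ < 1) {i : ℕ} {H : Finset (Vtx N)} {x : Vtx N}
    (hZ₀ : 1 - δ ≤ ZNA N c (A i ∪ H) x)
    (hZ₁ : ∀ y, 1 - δ ≤ ZNA N c (A (i + 1) ∪ insert y H) y) (b : Vtx N) :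
    memQ N c A i 2 H x b ≤ (∑ y, edgeProb N c x y * edgeProb N c y b) / (1 - δ) ^ 2 := by
  rw [sum_div]
  refine sum_le_sum fun y _ => ?_
  rw [memQ_one, sq, ← div_mul_div_comm]
  exact mul_le_mul (transPA_le_div hc hδ hZ₀ y) (transPA_le_div hc hδ (hZ₁ y) b)
    (transPA_nonneg hc _ y b) (div_nonneg (edgeProb_nonneg hc x y) (by linarith))

lemma memQ_add_two_le (hc : 0 ≤ c) {j : ℕ} {b : Vtx N} {B : ℝ} (hB : 0 ≤ B)
    (h₂ : ∀ i H x, 1 ≤ i → i + 2 ≤ j + 1 → #H + 2 ≤ j + 1 → memQ N c A i 2 H x b ≤ B) (m : ℕ) :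
    ∀ i H x, 1 ≤ i → i + (m + 2) ≤ j + 1 → #H + (m + 2) ≤ j + 1 →
      memQ N c A i (m + 2) H x b ≤ B := by
  induction m with
  | zero => exact h₂
  | succ m ih =>
    intro i H x hi hij hH
    refine sum_transPA_mul_le hc _ x (fun y => ih _ _ _ (by omega) (by omega) ?_) hB
    have := card_insert_le y H
    omega

lemma kernelQ_le (hc : 0 ≤ c) {δ : ℝ} (hδ₀ : 0 ≤ δ) (hδ : δ < 1) {j : ℕ} (hj : 1 ≤ j)
    (hZ : ∀ i H x, 1 ≤ i → i ≤ j → #H ≤ j → 1 - δ ≤ ZNA N c (A i ∪ H) x) (a b : Vtx N) :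
    kernelQ N c A j a b ≤
      max ((c / N) ^ 2 * (4 * Real.log N + 12)) (edgeProb N c a b) / (1 - δ) ^ 2 := by
  have hδ' : 0 < 1 - δ := by linarith
  obtain rfl | ⟨m, rfl⟩ : j = 1 ∨ ∃ m, j = m + 2 := by
    rcases Nat.lt_or_ge j 2 with h | h
    · exact .inl (by omega)
    · exact .inr ⟨j - 2, by omega⟩
  · rw [kernelQ, memQ_one]
    calc transPA N c (A 1 ∪ {a}) a b ≤ edgeProb N c a b / (1 - δ) :=
          transPA_le_div hc hδ (hZ 1 {a} a le_rfl le_rfl (by simp)) b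
      _ ≤ edgeProb N c a b / (1 - δ) ^ 2 :=
          div_le_div_of_nonneg_left (edgeProb_nonneg hc a b) (by positivity) (by nlinarith)
      _ ≤ _ := by gcongr; exact le_max_right _ _
  · have h₂ : ∀ i H x, 1 ≤ i → i + 2 ≤ m + 2 + 1 → #H + 2 ≤ m + 2 + 1 →
        memQ N c A i 2 H x b ≤ (c / N) ^ 2 * (4 * Real.log N + 12) / (1 - δ) ^ 2 := by
      intro i H x hi hij hH
      refine (memQ_two_le A hc hδ (hZ i H x hi (by omega) (by omega))
        (fun y => hZ (i + 1) _ y (by omega) (by omega) ?_) b).trans ?_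
      · have := card_insert_le y H
        omega
      · gcongr
        exact sum_edgeProb_mul_edgeProb_le hc x b
    refine (memQ_add_two_le A hc (by positivity) h₂ m 1 {a} a le_rfl (by omega)
      (by simp; omega)).trans ?_
    gcongr
    exact le_max_left _ _

end MemoryWalk

lemma max_div_sq_le_one_add_mul_max {c x L p ε δ : ℝ} (hε : 0 < ε) (hL : 6 / ε ≤ L)
    (hp : 0 ≤ p) (hδε : 1 + ε / 2 ≤ (1 + ε) * (1 - δ) ^ 2) :
    max ((c / x) ^ 2 * (4 * L + 12)) p / (1 - δ) ^ 2 ≤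
      (1 + ε) * max (4 * c ^ 2 * L / x ^ 2) p := by
  have hlog : (c / x) ^ 2 * (4 * L + 12) ≤ (1 + ε / 2) * (4 * c ^ 2 * L / x ^ 2) := by
    rw [div_pow, div_mul_eq_mul_div, mul_div_assoc']
    refine div_le_div_of_nonneg_right ?_ (by positivity)
    have := (div_le_iff₀ hε).1 hL
    nlinarith [sq_nonneg c]
  have hM : 0 ≤ max (4 * c ^ 2 * L / x ^ 2) p := hp.trans (le_max_right _ _)
  rw [div_le_iff₀ (by nlinarith)]
  calc max ((c / x) ^ 2 * (4 * L + 12)) p ≤ (1 + ε / 2) * max (4 * c ^ 2 * L / x ^ 2) p := by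
        rw [mul_max_of_nonneg _ _ (by positivity)]
        exact max_le_max hlog (le_mul_of_one_le_left hp (by linarith))
    _ ≤ (1 + ε) * max (4 * c ^ 2 * L / x ^ 2) p * (1 - δ) ^ 2 := by nlinarith

lemma exists_one_add_half_le_mul_one_sub_sq {ε : ℝ} (hε : 0 < ε) :
    ∃ δ, 0 < δ ∧ δ < 1 ∧ 1 + ε / 2 ≤ (1 + ε) * (1 - δ) ^ 2 := by
  refine ⟨ε / (4 * (1 + ε)), by positivity, by rw [div_lt_one (by positivity)]; linarith, ?_⟩
  have : (1 + ε) * (ε / (4 * (1 + ε))) = ε / 4 := by field_simp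
  nlinarith [sq_nonneg (ε / (4 * (1 + ε)))]

theorem stmt19_general (T : ℝ) (K : ℝ) (ε : ℝ) (hε : 0 < ε) :
    ∃ N₀ : ℕ, ∀ (N : ℕ) [NeZero N], N₀ ≤ N →
      ∀ j : ℕ, 1 ≤ j → (j : ℝ) ≤ T * (N : ℝ) ^ ((4 : ℝ) / 3) →
        ∀ A : ℕ → Finset (Vtx N),
          (∀ i i' : ℕ, 1 ≤ i → i ≤ i' → i' ≤ j → A i ⊆ A i') →
          ((A j).card : ℝ) ≤ K * (N : ℝ) ^ ((4 : ℝ) / 3) →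
          ∀ a b : Vtx N, b ∉ A j → b ≠ a →
            kernelQ N ccr A j a b ≤
              (1 + ε) * max (4 * ccr ^ 2 * Real.log N / (N : ℝ) ^ 2)
                (edgeProb N ccr a b) := by
  obtain ⟨δ, hδ, hδ₁, hδε⟩ := exists_one_add_half_le_mul_one_sub_sq hε
  obtain ⟨N₀, hN₀⟩ := Filter.eventually_atTop.1 <| (eventually_one_sub_le_ZNA (K + T) hδ).and <|
    (Real.tendsto_log_atTop.comp tendsto_natCast_atTop_atTop).eventually_ge_atTop (6 / ε)
  refine ⟨N₀, fun N _ hN j hj hjT A hA hAj a b _ _ => ?_⟩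
  obtain ⟨hZ, hlog⟩ := hN₀ N hN
  have hQ := kernelQ_le A ccr_pos.le hδ.le hδ₁ hj (fun i H x hi hij hH => hZ _ x <| by
    have := (card_union_le (A i) H).trans (add_le_add (card_le_card (hA i j hi hij le_rfl)) hH)
    have : ((A i ∪ H).card : ℝ) ≤ (A j).card + j := by exact_mod_cast this
    linarith) a b
  exact hQ.trans (max_div_sq_le_one_add_mul_max hε hlog (edgeProb_nonneg ccr_pos.le a b) hδε)

/-- Let `c = c^cr`. For all `T > 0`, `K > 0` and every `ε > 0` there is `N₀` such that
for every `N ≥ N₀`, every `j` with `1 ≤ j ≤ T·N^{4/3}`, every nondecreasing sequence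
`𝐀 = (A₁ ⊆ … ⊆ A_j)` with `|A_j| ≤ K·N^{4/3}`, every `a ∈ V_N` and every
`b ∈ V_N ∖ (A_j ∪ {a})`:
`Q(𝐀,j;a,b) ≤ (1 + ε)·max(4c²·(log N)/N², p(a,b))`. -/
theorem stmt19 (T : ℝ) (hT : 0 < T) (K : ℝ) (hK : 0 < K) (ε : ℝ) (hε : 0 < ε) :
    ∃ N₀ : ℕ, ∀ (N : ℕ) [NeZero N], N₀ ≤ N →
      ∀ j : ℕ, 1 ≤ j → (j : ℝ) ≤ T * (N : ℝ) ^ ((4 : ℝ) / 3) →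
        ∀ A : ℕ → Finset (Vtx N),
          (∀ i i' : ℕ, 1 ≤ i → i ≤ i' → i' ≤ j → A i ⊆ A i') →
          ((A j).card : ℝ) ≤ K * (N : ℝ) ^ ((4 : ℝ) / 3) →
          ∀ a b : Vtx N, b ∉ A j → b ≠ a →
            kernelQ N ccr A j a b ≤
              (1 + ε) * max (4 * ccr ^ 2 * Real.log N / (N : ℝ) ^ 2)
                (edgeProb N ccr a b) :=
  stmt19_general T K ε hε
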